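/- arXiv:math/0308270 — 8 statements merged into one kernel-verified Lean document; each statement's English description precedes it below -/
import Mathlib

section
/- For any vectors x, y, z in a complex inner product space, the 2-inner product Cauchy–Schwarz inequality holds: |(x,y|z)|² ≤ (x,x|z)·(y,y|z), where (x,y|z) := ⟪x,y⟫‖z‖² − ⟪x,z⟫⟪z,y⟫. -/
open scoped BigOperators

/-- The standard 2-inner product on a complex inner product space:
`(x,y|z) = ⟪x,y⟫‖z‖² − ⟪x,z⟫⟪z,y⟫`. -/
noncomputable def tinner {H : Type*} [NormedAddCommGroup H] [InnerProductSpace ℂ H]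
    (x y z : H) : ℂ :=
  (inner ℂ x y : ℂ) * ((‖z‖ : ℂ) ^ 2) - (inner ℂ x z : ℂ) * (inner ℂ z y : ℂ)

/-- The associated 2-norm `‖x|z‖ = √(x,x|z)`. -/
noncomputable def tnorm {H : Type*} [NormedAddCommGroup H] [InnerProductSpace ℂ H]
    (x z : H) : ℝ :=
  Real.sqrt (tinner x x z).re

/-!
The vector `‖z‖² x - ⟪z, x⟫ z` is `‖z‖²` times the component of `x` orthogonal to `z`, and the
inner product of two such vectors is `‖z‖² (x,y|z)`. So, up to the positive factor `‖z‖⁴`, the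
inequality is the ordinary Cauchy–Schwarz inequality for these vectors.
-/

open scoped InnerProductSpace

section ScaledPerp

variable {H : Type*} [NormedAddCommGroup H] [InnerProductSpace ℂ H]

noncomputable def scaledPerp (z x : H) : H := ((‖z‖ : ℂ) ^ 2) • x - ⟪z, x⟫_ℂ • z

theorem inner_scaledPerp (x y z : H) :
    ⟪scaledPerp z x, scaledPerp z y⟫_ℂ = (‖z‖ : ℂ) ^ 2 * tinner x y z := by
  simp only [scaledPerp, tinner, inner_sub_left, inner_sub_right, inner_smul_left,
    inner_smul_right, inner_conj_symm, map_pow, Complex.conj_ofReal,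
    inner_self_eq_norm_sq_to_K, RCLike.ofReal_eq_complex_ofReal]
  ring

theorem norm_inner_scaledPerp (x y z : H) :
    ‖⟪scaledPerp z x, scaledPerp z y⟫_ℂ‖ = ‖z‖ ^ 2 * ‖tinner x y z‖ := by
  simp [inner_scaledPerp]

theorem norm_scaledPerp_sq (x z : H) :
    ‖scaledPerp z x‖ ^ 2 = ‖z‖ ^ 2 * (tinner x x z).re := by
  have h := congrArg Complex.re (inner_scaledPerp x x z)
  rw [inner_self_eq_norm_sq_to_K] at h
  simpa [← Complex.ofReal_pow] using h

end ScaledPerp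

theorem tinner_cauchy_schwarz {H : Type*} [NormedAddCommGroup H] [InnerProductSpace ℂ H]
    (x y z : H) :
    ‖tinner x y z‖ ^ 2 ≤ (tinner x x z).re * (tinner y y z).re := by
  rcases eq_or_ne z 0 with rfl | hz
  · simp [tinner]
  refine le_of_mul_le_mul_left ?_ (by positivity : 0 < (‖z‖ ^ 2) ^ 2)
  calc (‖z‖ ^ 2) ^ 2 * ‖tinner x y z‖ ^ 2
      = ‖⟪scaledPerp z x, scaledPerp z y⟫_ℂ‖ ^ 2 := by rw [norm_inner_scaledPerp]; ring
    _ ≤ (‖scaledPerp z x‖ * ‖scaledPerp z y‖) ^ 2 := by gcongr; exact norm_inner_le_norm _ _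
    _ = (‖z‖ ^ 2) ^ 2 * ((tinner x x z).re * (tinner y y z).re) := by
        rw [mul_pow, norm_scaledPerp_sq, norm_scaledPerp_sq]; ring
end

section
/- Bessel's inequality in 2-inner product spaces: let H be a complex inner product space with 2-inner product (x,y|z) := ⟪x,y⟫‖z‖² − ⟪x,z⟫⟪z,y⟫ and 2-norm ‖x|z‖ := √(x,x|z). If e₁, …, eₙ, z ∈ H satisfy (eᵢ,eⱼ|z) = δᵢⱼ for all i, j ∈ {1,…,n}, then for every x ∈ H, ∑_{i=1}^n |(x,eᵢ|z)|² ≤ ‖x|z‖². -/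
open scoped BigOperators

/-!
`(x,y|z)` is the ordinary inner product `⟪T x, T y⟫` of the vectors `T x = ‖z‖ x − (⟪z,x⟫/‖z‖) z`,
i.e. `‖z‖` times the components orthogonal to `z`. Hence `T` maps a `z`-orthonormal family to an
orthonormal one, `‖x|z‖ = ‖T x‖`, and the claim is the classical Bessel inequality for `T x`.
-/

open scoped InnerProductSpace

section TwoInner

variable {H : Type*} [NormedAddCommGroup H] [InnerProductSpace ℂ H]

noncomputable def scaledOrthComponent (z x : H) : H :=
  (‖z‖ : ℂ) • x - (⟪z, x⟫_ℂ / ‖z‖) • z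

theorem tinner_eq_inner_scaledOrthComponent (x y z : H) :
    tinner x y z = ⟪scaledOrthComponent z x, scaledOrthComponent z y⟫_ℂ := by
  rcases eq_or_ne z 0 with rfl | hz
  · simp [tinner, scaledOrthComponent]
  have hz' : (‖z‖ : ℂ) ≠ 0 := by exact_mod_cast norm_ne_zero_iff.mpr hz
  have hzz : ⟪z, z⟫_ℂ = (‖z‖ : ℂ) ^ 2 := inner_self_eq_norm_sq_to_K z
  have hxz : ⟪x, z⟫_ℂ = starRingEnd ℂ ⟪z, x⟫_ℂ := (inner_conj_symm x z).symm
  simp only [tinner, scaledOrthComponent, inner_sub_left, inner_sub_right, inner_smul_left,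
    inner_smul_right, hzz, hxz, map_div₀, Complex.conj_ofReal]
  field_simp
  ring

theorem orthonormal_scaledOrthComponent {ι : Type*} [DecidableEq ι] {e : ι → H} {z : H}
    (horth : ∀ i j, tinner (e i) (e j) z = if i = j then 1 else 0) :
    Orthonormal ℂ (fun i => scaledOrthComponent z (e i)) :=
  orthonormal_iff_ite.mpr fun i j => by
    rw [← tinner_eq_inner_scaledOrthComponent, horth]

theorem tnorm_eq_norm_scaledOrthComponent (x z : H) :
    tnorm x z = ‖scaledOrthComponent z x‖ := by
  rw [tnorm, tinner_eq_inner_scaledOrthComponent, ← RCLike.re_to_complex, inner_self_eq_norm_sq,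
    Real.sqrt_sq (norm_nonneg _)]

end TwoInner

theorem bessel_two_inner {H : Type*} [NormedAddCommGroup H] [InnerProductSpace ℂ H]
    (n : ℕ) (e : Fin n → H) (z : H)
    (horth : ∀ i j, tinner (e i) (e j) z = if i = j then 1 else 0) (x : H) :
    ∑ i, ‖tinner x (e i) z‖ ^ 2 ≤ tnorm x z ^ 2 := by
  simp only [tinner_eq_inner_scaledOrthComponent, tnorm_eq_norm_scaledOrthComponent]
  simpa only [norm_inner_symm] using
    (orthonormal_scaledOrthComponent horth).sum_inner_products_le
      (x := scaledOrthComponent z x) (s := Finset.univ)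
end

section
/- Let z₁, …, zₙ, z be vectors in a complex inner product space and μ₁, …, μₙ ∈ ℂ. With (x,y|z) := ⟪x,y⟫‖z‖² − ⟪x,z⟫⟪z,y⟫ and ‖x|z‖ := √(x,x|z), one has ‖∑_{i=1}^n μᵢ zᵢ | z‖² ≤ (∑_{i=1}^n |μᵢ|²) · [max_{1≤i≤n} ‖zᵢ|z‖² + (∑_{1 ≤ i ≠ j ≤ n} |(zᵢ,zⱼ|z)|²)^{1/2}]. -/
open scoped BigOperators

/-! Expanding sesquilinearly, `‖∑ μᵢ zᵢ|z‖² = Re ∑ᵢⱼ μ̄ᵢ μⱼ (zᵢ,zⱼ|z)`. The diagonal terms are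
`|μᵢ|² ‖zᵢ|z‖²`, at most `|μᵢ|²` times the maximum; the off-diagonal part is bounded by
Cauchy–Schwarz over the pairs `(i, j)`, since `∑ᵢⱼ |μᵢ|² |μⱼ|² = (∑ᵢ |μᵢ|²)²`. -/

open Finset ComplexConjugate

theorem Finset.sum_sum_eq_sum_diag_add_sum_sum_ne {ι M : Type*} [DecidableEq ι]
    [AddCommMonoid M] (s : Finset ι) (f : ι → ι → M) :
    ∑ i ∈ s, ∑ j ∈ s, f i j = ∑ i ∈ s, f i i + ∑ i ∈ s, ∑ j ∈ s, if i ≠ j then f i j else 0 := by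
  rw [← sum_add_distrib]
  refine sum_congr rfl fun i hi => ?_
  rw [← sum_filter, filter_ne, add_sum_erase _ _ hi]

theorem Finset.sum_mul_le_sum_mul_sup' {ι : Type*} (s : Finset ι) (hs : s.Nonempty)
    (a b : ι → ℝ) (ha : ∀ i ∈ s, 0 ≤ a i) :
    ∑ i ∈ s, a i * b i ≤ (∑ i ∈ s, a i) * s.sup' hs b := by
  rw [sum_mul]
  exact sum_le_sum fun i hi => mul_le_mul_of_nonneg_left (le_sup' b hi) (ha i hi)

/-- The operator norm of a matrix is at most its Frobenius norm. -/
theorem norm_sum_sum_conj_mul_mul_le {ι : Type*} [Fintype ι] (μ : ι → ℂ) (t : ι → ι → ℂ) :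
    ‖∑ i, ∑ j, conj (μ i) * μ j * t i j‖ ≤
      (∑ i, ‖μ i‖ ^ 2) * √(∑ i, ∑ j, ‖t i j‖ ^ 2) := by
  have hμ : ∑ p : ι × ι, (‖μ p.1‖ * ‖μ p.2‖) ^ 2 = (∑ i, ‖μ i‖ ^ 2) ^ 2 := by
    simp only [mul_pow, Fintype.sum_prod_type, sq (∑ i, _), sum_mul_sum]
  calc ‖∑ i, ∑ j, conj (μ i) * μ j * t i j‖
      ≤ ∑ i, ∑ j, ‖μ i‖ * ‖μ j‖ * ‖t i j‖ := by
        refine (norm_sum_le _ _).trans (sum_le_sum fun i _ => (norm_sum_le _ _).trans ?_)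
        simp only [norm_mul, Complex.norm_conj, le_refl]
    _ = ∑ p : ι × ι, (‖μ p.1‖ * ‖μ p.2‖) * ‖t p.1 p.2‖ := (Fintype.sum_prod_type' _).symm
    _ ≤ √(∑ p : ι × ι, (‖μ p.1‖ * ‖μ p.2‖) ^ 2) * √(∑ p : ι × ι, ‖t p.1 p.2‖ ^ 2) :=
        Real.sum_mul_le_sqrt_mul_sqrt _ _ _
    _ = (∑ i, ‖μ i‖ ^ 2) * √(∑ i, ∑ j, ‖t i j‖ ^ 2) := by
        rw [hμ, Real.sqrt_sq (by positivity), Fintype.sum_prod_type]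

section TwoInner

variable {H : Type*} [NormedAddCommGroup H] [InnerProductSpace ℂ H]

theorem tinner_self (x z : H) :
    tinner x x z = ((‖x‖ ^ 2 * ‖z‖ ^ 2 - ‖inner ℂ x z‖ ^ 2 : ℝ) : ℂ) := by
  rw [tinner, ← inner_conj_symm z x, Complex.mul_conj', inner_self_eq_norm_sq_to_K,
    RCLike.ofReal_eq_complex_ofReal]
  push_cast
  ring

theorem tnorm_sq (x z : H) : tnorm x z ^ 2 = (tinner x x z).re := by
  refine Real.sq_sqrt ?_
  rw [tinner_self, Complex.ofReal_re, sub_nonneg, ← mul_pow]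
  exact pow_le_pow_left₀ (norm_nonneg _) (norm_inner_le_norm x z) 2

theorem tinner_sum_smul_sum_smul {ι : Type*} (s : Finset ι) (μ ν : ι → ℂ) (x y : ι → H)
    (z : H) :
    tinner (∑ i ∈ s, μ i • x i) (∑ j ∈ s, ν j • y j) z =
      ∑ i ∈ s, ∑ j ∈ s, conj (μ i) * ν j * tinner (x i) (y j) z := by
  simp only [tinner, sum_inner, inner_smul_left, sum_mul, ← sum_sub_distrib]
  refine sum_congr rfl fun i _ => ?_
  simp only [inner_sum, inner_smul_right, mul_sum, sum_mul, ← sum_sub_distrib]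
  refine sum_congr rfl fun j _ => ?_
  ring

end TwoInner

theorem tnorm_sum_sq_le_sum_mul {H : Type*} [NormedAddCommGroup H] [InnerProductSpace ℂ H]
    (n : ℕ) (hn : 0 < n) (zv : Fin n → H) (z : H) (μ : Fin n → ℂ) :
    tnorm (∑ i, μ i • zv i) z ^ 2 ≤
      (∑ i, ‖μ i‖ ^ 2) *
        ((Finset.univ.sup' ⟨⟨0, hn⟩, Finset.mem_univ _⟩ fun i => tnorm (zv i) z ^ 2) +
          Real.sqrt (∑ i, ∑ j, if i ≠ j then ‖tinner (zv i) (zv j) z‖ ^ 2 else 0)) := by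
  set offDiag : Fin n → Fin n → ℂ := fun i j => if i ≠ j then tinner (zv i) (zv j) z else 0
  have hdiag : (∑ i, conj (μ i) * μ i * tinner (zv i) (zv i) z).re =
      ∑ i, ‖μ i‖ ^ 2 * tnorm (zv i) z ^ 2 := by
    simp only [Complex.re_sum, Complex.conj_mul', tnorm_sq, ← Complex.ofReal_pow,
      Complex.re_ofReal_mul]
  have hoff : (∑ i, ∑ j, if i ≠ j then conj (μ i) * μ j * tinner (zv i) (zv j) z else 0) =
      ∑ i, ∑ j, conj (μ i) * μ j * offDiag i j := by
    simp only [offDiag, mul_ite, mul_zero]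
  have hoff_norm : ∑ i, ∑ j, ‖offDiag i j‖ ^ 2 =
      ∑ i, ∑ j, if i ≠ j then ‖tinner (zv i) (zv j) z‖ ^ 2 else 0 := by
    simp only [offDiag, apply_ite (‖·‖ ^ 2), norm_zero, zero_pow two_ne_zero]
  rw [tnorm_sq, tinner_sum_smul_sum_smul, sum_sum_eq_sum_diag_add_sum_sum_ne, Complex.add_re,
    hdiag, hoff, mul_add, ← hoff_norm]
  exact add_le_add (sum_mul_le_sum_mul_sup' _ _ _ _ fun i _ => sq_nonneg _)
    ((Complex.re_le_norm _).trans (norm_sum_sum_conj_mul_mul_le μ offDiag))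
end

section
/- If e₁, …, eₙ, z are vectors in a complex inner product space such that (eᵢ,eⱼ|z) = δᵢⱼ, where (u,v|z) := ⟪u,v⟫‖z‖² − ⟪u,z⟫⟪z,v⟫, then for every x, ∑_{i=1}^n |(x,eᵢ|z)|² ≤ √n · ‖x|z‖ · max_{1≤i≤n} |(x,eᵢ|z)|, where ‖x|z‖ := √(x,x|z). -/
/-!
For `z ≠ 0` the map `u ↦ ‖z‖ u − (⟪z,u⟫/‖z‖) z` turns `(·,·|z)` into the ambient inner product, so
the `z`-orthonormal family becomes an honest orthonormal family and Bessel's inequality gives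
`S := ∑ |(x,eᵢ|z)|² ≤ ‖x|z‖²`. Trivially also `S ≤ n M²` with `M` the maximum, and multiplying
the two bounds gives `S² ≤ n ‖x|z‖² M²`.
-/

open scoped BigOperators

open Finset

theorem sum_sq_le_sqrt_card_mul_mul_sup' {ι : Type*} {s : Finset ι} (hs : s.Nonempty)
    {f : ι → ℝ} (hf : ∀ i ∈ s, 0 ≤ f i) {B : ℝ} (hB : 0 ≤ B)
    (hsum : ∑ i ∈ s, f i ^ 2 ≤ B ^ 2) :
    ∑ i ∈ s, f i ^ 2 ≤ Real.sqrt #s * B * s.sup' hs f := by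
  set M := s.sup' hs f
  have hM : 0 ≤ M := (hf _ hs.choose_spec).trans (le_sup' f hs.choose_spec)
  have hsum_card : ∑ i ∈ s, f i ^ 2 ≤ #s * M ^ 2 := by
    simpa using sum_le_card_nsmul s (fun i => f i ^ 2) (M ^ 2) fun i hi =>
      pow_le_pow_left₀ (hf i hi) (le_sup' f hi) 2
  have hS : 0 ≤ ∑ i ∈ s, f i ^ 2 := sum_nonneg fun i _ => sq_nonneg (f i)
  have hsq : (∑ i ∈ s, f i ^ 2) ^ 2 ≤ (Real.sqrt #s * B * M) ^ 2 :=
    calc (∑ i ∈ s, f i ^ 2) ^ 2 = (∑ i ∈ s, f i ^ 2) * ∑ i ∈ s, f i ^ 2 := sq _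
      _ ≤ B ^ 2 * (#s * M ^ 2) := mul_le_mul hsum hsum_card hS (sq_nonneg B)
      _ = (Real.sqrt #s * B * M) ^ 2 := by
        rw [mul_pow, mul_pow, Real.sq_sqrt (Nat.cast_nonneg _)]; ring
  exact (pow_le_pow_iff_left₀ hS (by positivity) two_ne_zero).mp hsq

section TwoInner

variable {H : Type*} [NormedAddCommGroup H] [InnerProductSpace ℂ H]

theorem tinner_zero_right (u v : H) : tinner u v 0 = 0 := by
  simp [tinner]

noncomputable def tinnerMap (z u : H) : H :=
  (‖z‖ : ℂ) • u - ((inner ℂ z u : ℂ) / (‖z‖ : ℂ)) • z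

theorem tinner_eq_inner_tinnerMap {z : H} (hz : z ≠ 0) (u v : H) :
    tinner u v z = inner ℂ (tinnerMap z u) (tinnerMap z v) := by
  have hz' : (‖z‖ : ℂ) ≠ 0 := by simpa using hz
  have hzz : (inner ℂ z z : ℂ) = (‖z‖ : ℂ) ^ 2 := by
    rw [inner_self_eq_norm_sq_to_K]; norm_cast
  simp only [tinnerMap, tinner, inner_sub_left, inner_sub_right, inner_smul_left,
    inner_smul_right, map_div₀, Complex.conj_ofReal, inner_conj_symm, hzz]
  field_simp
  ring

theorem tnorm_eq_norm_tinnerMap {z : H} (hz : z ≠ 0) (x : H) :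
    tnorm x z = ‖tinnerMap z x‖ := by
  rw [tnorm, tinner_eq_inner_tinnerMap hz]
  exact (congrArg Real.sqrt (inner_self_eq_norm_sq (𝕜 := ℂ) _)).trans
    (Real.sqrt_sq (norm_nonneg _))

theorem orthonormal_tinnerMap {ι : Type*} [DecidableEq ι] {e : ι → H} {z : H} (hz : z ≠ 0)
    (horth : ∀ i j, tinner (e i) (e j) z = if i = j then 1 else 0) :
    Orthonormal ℂ fun i => tinnerMap z (e i) := by
  rw [orthonormal_iff_ite]
  intro i j
  rw [← tinner_eq_inner_tinnerMap hz, horth]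

theorem sum_norm_tinner_sq_le {ι : Type*} [DecidableEq ι] (s : Finset ι) {e : ι → H} {z : H}
    (horth : ∀ i j, tinner (e i) (e j) z = if i = j then 1 else 0) (x : H) :
    ∑ i ∈ s, ‖tinner x (e i) z‖ ^ 2 ≤ tnorm x z ^ 2 := by
  rcases eq_or_ne z 0 with rfl | hz
  · simp [tnorm, tinner_zero_right]
  rw [tnorm_eq_norm_tinnerMap hz]
  convert (orthonormal_tinnerMap hz horth).sum_inner_products_le (s := s) (tinnerMap z x)
    using 3
  rw [tinner_eq_inner_tinnerMap hz, norm_inner_symm]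

end TwoInner

theorem bessel_max_two_inner {H : Type*} [NormedAddCommGroup H] [InnerProductSpace ℂ H]
    (n : ℕ) (hn : 0 < n) (e : Fin n → H) (z : H)
    (horth : ∀ i j, tinner (e i) (e j) z = if i = j then 1 else 0) (x : H) :
    ∑ i, ‖tinner x (e i) z‖ ^ 2 ≤
      Real.sqrt n * tnorm x z *
        (Finset.univ.sup' ⟨⟨0, hn⟩, Finset.mem_univ _⟩ fun i =>
          ‖tinner x (e i) z‖) := by
  have h := sum_sq_le_sqrt_card_mul_mul_sup' ⟨⟨0, hn⟩, mem_univ _⟩ (fun i _ => norm_nonneg _)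
    (Real.sqrt_nonneg _) (sum_norm_tinner_sq_le univ horth x)
  rwa [card_univ, Fintype.card_fin] at h
end

section
/- The classical Boas–Bellman inequality: if x, y₁, …, yₙ are elements of a complex inner product space H, then ∑_{i=1}^n |⟪x,yᵢ⟫|² ≤ ‖x‖² · [max_{1≤i≤n} ‖yᵢ‖² + (∑_{1≤i≠j≤n} |⟪yᵢ,yⱼ⟫|²)^{1/2}]. -/
/-!
With `aᵢ = ⟪x, yᵢ⟫` and `z = ∑ conj aᵢ • yᵢ` we have `⟪x, z⟫ = ∑ ‖aᵢ‖²`, so by Cauchy–Schwarz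
`(∑ ‖aᵢ‖²)² ≤ ‖x‖² ‖z‖²`. Expanding `‖z‖²` as a double sum over the Gram matrix of the `yᵢ`, the
diagonal is bounded by `(∑ ‖aᵢ‖²) maxᵢ ‖yᵢ‖²` and, by Cauchy–Schwarz over pairs `(i, j)`, the
off-diagonal part by `(∑ ‖aᵢ‖²) (∑_{i ≠ j} ‖⟪yᵢ, yⱼ⟫‖²)^{1/2}`; dividing by `∑ ‖aᵢ‖²` gives the claim.
-/

open Finset
open scoped InnerProductSpace ComplexConjugate

lemma Real.sum_sum_mul_mul_le_sum_sq_mul_sqrt {ι : Type*} (s : Finset ι) (a : ι → ℝ)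
    (b : ι → ι → ℝ) :
    ∑ i ∈ s, ∑ j ∈ s, a i * a j * b i j ≤
      (∑ i ∈ s, a i ^ 2) * √(∑ i ∈ s, ∑ j ∈ s, b i j ^ 2) := by
  have hS : 0 ≤ ∑ i ∈ s, a i ^ 2 := sum_nonneg fun i _ => sq_nonneg (a i)
  have hS_sq : ∑ p ∈ s ×ˢ s, (a p.1 * a p.2) ^ 2 = (∑ i ∈ s, a i ^ 2) ^ 2 := by
    rw [sq (∑ i ∈ s, a i ^ 2), sum_mul_sum, ← sum_product']
    simp_rw [mul_pow]
  simp_rw [← sum_product' s s]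
  calc ∑ p ∈ s ×ˢ s, a p.1 * a p.2 * b p.1 p.2
      ≤ √(∑ p ∈ s ×ˢ s, (a p.1 * a p.2) ^ 2) * √(∑ p ∈ s ×ˢ s, b p.1 p.2 ^ 2) :=
        Real.sum_mul_le_sqrt_mul_sqrt _ _ _
    _ = _ := by rw [hS_sq, Real.sqrt_sq hS]

lemma Fintype.sum_sum_eq_sum_diag_add_sum_offDiag {ι : Type*} [Fintype ι] [DecidableEq ι]
    (f : ι → ι → ℝ) :
    ∑ i, ∑ j, f i j = ∑ i, f i i + ∑ i, ∑ j, if i ≠ j then f i j else 0 := by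
  rw [← sum_add_distrib]
  refine Finset.sum_congr rfl fun i _ => ?_
  rw [← sum_filter, filter_ne, add_sum_erase _ _ (mem_univ i)]

section InnerProductSpace

variable {ι 𝕜 E : Type*} [Fintype ι] [RCLike 𝕜] [NormedAddCommGroup E] [InnerProductSpace 𝕜 E]

lemma norm_inner_self_eq_norm_sq (v : E) : ‖⟪v, v⟫_𝕜‖ = ‖v‖ ^ 2 := by
  rw [inner_self_eq_norm_sq_to_K, norm_pow, RCLike.norm_ofReal, abs_norm]

lemma inner_sum_smul_sum_smul_self (c : ι → 𝕜) (v : ι → E) :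
    ⟪∑ i, c i • v i, ∑ i, c i • v i⟫_𝕜 = ∑ i, ∑ j, conj (c i) * c j * ⟪v i, v j⟫_𝕜 := by
  rw [sum_inner]
  simp_rw [inner_sum, inner_smul_left, inner_smul_right, mul_assoc]

lemma norm_sum_smul_sq_le_sum_sum (c : ι → 𝕜) (v : ι → E) :
    ‖∑ i, c i • v i‖ ^ 2 ≤ ∑ i, ∑ j, ‖c i‖ * ‖c j‖ * ‖⟪v i, v j⟫_𝕜‖ := by
  calc ‖∑ i, c i • v i‖ ^ 2 = ‖⟪∑ i, c i • v i, ∑ i, c i • v i⟫_𝕜‖ :=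
        (norm_inner_self_eq_norm_sq _).symm
    _ ≤ ∑ i, ∑ j, ‖conj (c i) * c j * ⟪v i, v j⟫_𝕜‖ := by
        rw [inner_sum_smul_sum_smul_self]
        exact (norm_sum_le _ _).trans (sum_le_sum fun i _ => norm_sum_le _ _)
    _ = ∑ i, ∑ j, ‖c i‖ * ‖c j‖ * ‖⟪v i, v j⟫_𝕜‖ := by
        simp only [norm_mul, RCLike.norm_conj]

lemma norm_sum_smul_sq_le [DecidableEq ι] (c : ι → 𝕜) (v : ι → E) {M : ℝ}
    (hM : ∀ i, ‖v i‖ ^ 2 ≤ M) :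
    ‖∑ i, c i • v i‖ ^ 2 ≤
      (∑ i, ‖c i‖ ^ 2) * (M + √(∑ i, ∑ j, if i ≠ j then ‖⟪v i, v j⟫_𝕜‖ ^ 2 else 0)) := by
  have h_diag : ∑ i, ‖c i‖ * ‖c i‖ * ‖⟪v i, v i⟫_𝕜‖ ≤ (∑ i, ‖c i‖ ^ 2) * M := by
    rw [sum_mul]
    refine sum_le_sum fun i _ => ?_
    rw [norm_inner_self_eq_norm_sq, ← sq]
    exact mul_le_mul_of_nonneg_left (hM i) (sq_nonneg _)
  have h_offDiag := Real.sum_sum_mul_mul_le_sum_sq_mul_sqrt univ (fun i => ‖c i‖)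
    fun i j => if i ≠ j then ‖⟪v i, v j⟫_𝕜‖ else 0
  simp only [mul_ite, mul_zero, ite_pow, zero_pow two_ne_zero] at h_offDiag
  calc ‖∑ i, c i • v i‖ ^ 2 ≤ ∑ i, ∑ j, ‖c i‖ * ‖c j‖ * ‖⟪v i, v j⟫_𝕜‖ :=
        norm_sum_smul_sq_le_sum_sum c v
    _ = _ := Fintype.sum_sum_eq_sum_diag_add_sum_offDiag _
    _ ≤ _ := by rw [mul_add]; exact add_le_add h_diag h_offDiag

lemma sum_norm_inner_sq_le_of_norm_sum_smul_sq_le (x : E) (v : ι → E) {K : ℝ} (hK : 0 ≤ K)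
    (h : ∀ c : ι → 𝕜, ‖∑ i, c i • v i‖ ^ 2 ≤ (∑ i, ‖c i‖ ^ 2) * K) :
    ∑ i, ‖⟪x, v i⟫_𝕜‖ ^ 2 ≤ ‖x‖ ^ 2 * K := by
  set S := ∑ i, ‖⟪x, v i⟫_𝕜‖ ^ 2
  set z := ∑ i, conj ⟪x, v i⟫_𝕜 • v i
  have hS : 0 ≤ S := sum_nonneg fun i _ => sq_nonneg _
  have h_inner : ⟪x, z⟫_𝕜 = S := by
    simp only [z, S, inner_sum, inner_smul_right, RCLike.conj_mul, RCLike.ofReal_sum,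
      RCLike.ofReal_pow]
  have h_le : S ≤ ‖x‖ * ‖z‖ := by
    calc S = ‖⟪x, z⟫_𝕜‖ := by rw [h_inner, RCLike.norm_ofReal, abs_of_nonneg hS]
      _ ≤ ‖x‖ * ‖z‖ := norm_inner_le_norm x z
  have h_z : ‖z‖ ^ 2 ≤ S * K := by
    simpa only [RCLike.norm_conj] using h fun i => conj ⟪x, v i⟫_𝕜
  rcases hS.eq_or_lt with hS0 | hS_pos
  · rw [← hS0]; positivity
  · refine le_of_mul_le_mul_left ?_ hS_pos
    calc S * S ≤ (‖x‖ * ‖z‖) ^ 2 := by rw [← sq]; gcongr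
      _ = ‖x‖ ^ 2 * ‖z‖ ^ 2 := mul_pow _ _ _
      _ ≤ ‖x‖ ^ 2 * (S * K) := by gcongr
      _ = S * (‖x‖ ^ 2 * K) := by ring

end InnerProductSpace

theorem boas_bellman {H : Type*} [NormedAddCommGroup H] [InnerProductSpace ℂ H]
    (n : ℕ) (hn : 0 < n) (x : H) (y : Fin n → H) :
    ∑ i, ‖(inner ℂ x (y i) : ℂ)‖ ^ 2 ≤
      ‖x‖ ^ 2 *
        ((Finset.univ.sup' ⟨⟨0, hn⟩, Finset.mem_univ _⟩ fun i => ‖y i‖ ^ 2) +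
          Real.sqrt (∑ i, ∑ j, if i ≠ j then ‖(inner ℂ (y i) (y j) : ℂ)‖ ^ 2 else 0)) := by
  have hM : ∀ i, ‖y i‖ ^ 2 ≤ univ.sup' ⟨⟨0, hn⟩, mem_univ _⟩ fun i => ‖y i‖ ^ 2 :=
    fun i => le_sup' (fun i => ‖y i‖ ^ 2) (mem_univ i)
  have hK : 0 ≤ (univ.sup' ⟨⟨0, hn⟩, mem_univ _⟩ fun i => ‖y i‖ ^ 2) +
      √(∑ i, ∑ j, if i ≠ j then ‖⟪y i, y j⟫_ℂ‖ ^ 2 else 0) :=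
    add_nonneg ((sq_nonneg _).trans (hM ⟨0, hn⟩)) (Real.sqrt_nonneg _)
  exact sum_norm_inner_sq_le_of_norm_sum_smul_sq_le x y hK fun c => norm_sum_smul_sq_le c y hM
end

section
/- Let (Ω, Σ, μ) be a measure space, ρ : Ω → [0,∞) measurable, and f, g, h real-valued functions with ρ^{1/2}f, ρ^{1/2}g, ρ^{1/2}h ∈ L²(μ). Then (1/2)∫∫ ρ(s)ρ(t) · det[[f(s), f(t)],[h(s), h(t)]] · det[[g(s), g(t)],[h(s), h(t)]] dμ(s)dμ(t) = det[[∫ρfg dμ, ∫ρfh dμ],[∫ρgh dμ, ∫ρh² dμ]]. -/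
/-!
Expanding the product of the two determinants writes the integrand as a sum of four products
`u s * v t`, where `u` and `v` are among the weighted products `ρ a b` with `a, b ∈ {f, g, h}`.
Each such iterated integral factors as `(∫ u) * (∫ v)`, and the four terms add up to twice
the Gram determinant on the right.
-/

open MeasureTheory

theorem integrable_mul_mul_of_memLp_sqrt_mul {Ω : Type*} [MeasurableSpace Ω] {μ : Measure Ω}
    {ρ a b : Ω → ℝ} (hρ0 : ∀ s, 0 ≤ ρ s)
    (ha : MemLp (fun s => Real.sqrt (ρ s) * a s) 2 μ)
    (hb : MemLp (fun s => Real.sqrt (ρ s) * b s) 2 μ) :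
    Integrable (fun s => ρ s * (a s * b s)) μ := by
  refine (ha.integrable_mul hb).congr (Filter.Eventually.of_forall fun s => ?_)
  rw [Pi.mul_apply, mul_mul_mul_comm, Real.mul_self_sqrt (hρ0 s)]

theorem integral_integral_sum_mul {α β ι 𝕜 : Type*} [RCLike 𝕜] [MeasurableSpace α]
    [MeasurableSpace β] {μ : Measure α} {ν : Measure β} (S : Finset ι) {u : ι → α → 𝕜}
    {v : ι → β → 𝕜}
    (hu : ∀ i ∈ S, Integrable (u i) μ) (hv : ∀ i ∈ S, Integrable (v i) ν) :
    ∫ s, ∫ t, ∑ i ∈ S, u i s * v i t ∂ν ∂μ = ∑ i ∈ S, (∫ s, u i s ∂μ) * ∫ t, v i t ∂ν := by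
  have inner : ∀ s, ∫ t, ∑ i ∈ S, u i s * v i t ∂ν = ∑ i ∈ S, u i s * ∫ t, v i t ∂ν := fun s => by
    rw [integral_finsetSum S fun i hi => (hv i hi).const_mul _]
    simp_rw [integral_const_mul]
  simp_rw [inner]
  rw [integral_finsetSum S fun i hi => (hu i hi).mul_const _]
  simp_rw [integral_mul_const]

theorem two_inner_det_repr_general {Ω : Type*} [MeasurableSpace Ω] (μ : Measure Ω)
    (ρ f g h : Ω → ℝ) (hρ0 : ∀ s, 0 ≤ ρ s)
    (hf2 : MemLp (fun s => Real.sqrt (ρ s) * f s) 2 μ)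
    (hg2 : MemLp (fun s => Real.sqrt (ρ s) * g s) 2 μ)
    (hh2 : MemLp (fun s => Real.sqrt (ρ s) * h s) 2 μ) :
    (1 / 2) * ∫ s, ∫ t, ρ s * ρ t *
        ((f s * h t - f t * h s) * (g s * h t - g t * h s)) ∂μ ∂μ =
      (∫ s, ρ s * (f s * g s) ∂μ) * (∫ s, ρ s * (h s) ^ 2 ∂μ) -
        (∫ s, ρ s * (f s * h s) ∂μ) * (∫ s, ρ s * (g s * h s) ∂μ) := by
  set w : (Ω → ℝ) → (Ω → ℝ) → Ω → ℝ := fun a b s => ρ s * (a s * b s)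
  have hw : ∀ {a b}, MemLp (fun s => Real.sqrt (ρ s) * a s) 2 μ →
      MemLp (fun s => Real.sqrt (ρ s) * b s) 2 μ → Integrable (w a b) μ :=
    integrable_mul_mul_of_memLp_sqrt_mul hρ0
  have expand : ∀ s t, ρ s * ρ t * ((f s * h t - f t * h s) * (g s * h t - g t * h s)) =
      ∑ i : Fin 4, ![w f g, -w f h, -w g h, w h h] i s * ![w h h, w g h, w f h, w f g] i t := by
    intro s t
    simp only [Fin.sum_univ_four, Matrix.cons_val, Pi.neg_apply, w]
    ring
  have hu : ∀ i ∈ Finset.univ, Integrable (![w f g, -w f h, -w g h, w h h] i) μ := by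
    intro i _; fin_cases i
    exacts [hw hf2 hg2, (hw hf2 hh2).neg, (hw hg2 hh2).neg, hw hh2 hh2]
  have hv : ∀ i ∈ Finset.univ, Integrable (![w h h, w g h, w f h, w f g] i) μ := by
    intro i _; fin_cases i
    exacts [hw hh2 hh2, hw hg2 hh2, hw hf2 hh2, hw hf2 hg2]
  simp_rw [expand]
  rw [integral_integral_sum_mul _ hu hv]
  simp only [Fin.sum_univ_four, Matrix.cons_val, Pi.neg_apply, integral_neg, pow_two, w]
  ring

theorem two_inner_det_repr {Ω : Type*} [MeasurableSpace Ω] (μ : Measure Ω)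
    [SigmaFinite μ] (ρ f g h : Ω → ℝ) (hρ : Measurable ρ) (hρ0 : ∀ s, 0 ≤ ρ s)
    (hf : Measurable f) (hg : Measurable g) (hh : Measurable h)
    (hf2 : MemLp (fun s => Real.sqrt (ρ s) * f s) 2 μ)
    (hg2 : MemLp (fun s => Real.sqrt (ρ s) * g s) 2 μ)
    (hh2 : MemLp (fun s => Real.sqrt (ρ s) * h s) 2 μ) :
    (1 / 2) * ∫ s, ∫ t, ρ s * ρ t *
        ((f s * h t - f t * h s) * (g s * h t - g t * h s)) ∂μ ∂μ =
      (∫ s, ρ s * (f s * g s) ∂μ) * (∫ s, ρ s * (h s) ^ 2 ∂μ) -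
        (∫ s, ρ s * (f s * h s) ∂μ) * (∫ s, ρ s * (g s * h s) ∂μ) :=
  two_inner_det_repr_general μ ρ f g h hρ0 hf2 hg2 hh2
end

section
/- Determinantal Boas–Bellman inequality: let (Ω, Σ, μ) be a measure space, ρ : Ω → [0,∞) measurable, and f, g₁, …, gₙ, h real-valued with ρ^{1/2}f, ρ^{1/2}gᵢ, ρ^{1/2}h ∈ L²(μ). Writing D(u,v) := det[[∫ρuv dμ, ∫ρuh dμ],[∫ρvh dμ, ∫ρh² dμ]], one has ∑_{i=1}^n D(f,gᵢ)² ≤ D(f,f) · [max_{1≤i≤n} D(gᵢ,gᵢ) + (∑_{1≤i≠j≤n} D(gⱼ,gᵢ)²)^{1/2}]. -/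
open MeasureTheory Finset
open scoped RealInnerProductSpace

/-!
On `L²(ρμ)` the determinant `D` is the Gram-determinant form
`(u, v) ↦ ⟪u, v⟫‖h‖² - ⟪u, h⟫⟪v, h⟫`, which is symmetric and, by Cauchy–Schwarz, positive
semidefinite. The Boas–Bellman inequality holds for every such bilinear form `B`: for
`z = ∑ B(x, yᵢ) yᵢ` one has `B(x, z) = S := ∑ B(x, yᵢ)²`, so `S² ≤ B(x, x) B(z, z)`; expanding
`B(z, z)`, the diagonal terms are at most `S · max B(yᵢ, yᵢ)` and, by Cauchy–Schwarz over the
pairs `i ≠ j`, the off-diagonal ones at most `S · (∑_{i≠j} B(yⱼ, yᵢ)²)^{1/2}`.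
-/

/-- The determinant `D(u,v) = (∫ρuv)(∫ρh²) − (∫ρuh)(∫ρvh)`. -/
noncomputable def Ddet {Ω : Type*} [MeasurableSpace Ω] (μ : Measure Ω)
    (ρ h u v : Ω → ℝ) : ℝ :=
  (∫ s, ρ s * (u s * v s) ∂μ) * (∫ s, ρ s * (h s) ^ 2 ∂μ) -
    (∫ s, ρ s * (u s * h s) ∂μ) * (∫ s, ρ s * (v s * h s) ∂μ)

namespace Finset

variable {ι : Type*} [Fintype ι] [DecidableEq ι]

theorem sum_sum_eq_sum_diag_add_sum_ite_ne (F : ι → ι → ℝ) :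
    ∑ i, ∑ j, F i j = ∑ i, F i i + ∑ i, ∑ j, if i ≠ j then F i j else 0 := by
  rw [← sum_add_distrib]
  refine sum_congr rfl fun i _ => ?_
  rw [sum_ite, sum_const_zero, add_zero, filter_ne, sum_erase_eq_sub (mem_univ i)]
  ring

theorem sum_ite_ne_mul_le (c : ι → ℝ) (a : ι → ι → ℝ) :
    ∑ i, ∑ j, (if i ≠ j then c i * c j * a i j else 0) ≤
      (∑ i, c i ^ 2) * √(∑ i, ∑ j, if i ≠ j then a i j ^ 2 else 0) := by
  set s := (univ : Finset (ι × ι)).filter fun p => p.1 ≠ p.2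
  have hs : ∀ G : ι → ι → ℝ, ∑ i, ∑ j, (if i ≠ j then G i j else 0) = ∑ p ∈ s, G p.1 p.2 := by
    intro G
    rw [sum_filter, ← univ_product_univ, sum_product]
  have hc : √(∑ p ∈ s, (c p.1 * c p.2) ^ 2) ≤ ∑ i, c i ^ 2 := by
    refine Real.sqrt_le_iff.mpr ⟨sum_nonneg fun i _ => sq_nonneg _, ?_⟩
    calc ∑ p ∈ s, (c p.1 * c p.2) ^ 2 ≤ ∑ p : ι × ι, (c p.1 * c p.2) ^ 2 :=
          sum_le_sum_of_subset_of_nonneg (subset_univ s) fun _ _ _ => sq_nonneg _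
      _ = (∑ i, c i ^ 2) ^ 2 := by
          rw [← univ_product_univ, sum_product, sq (∑ i, c i ^ 2), sum_mul_sum]
          simp only [mul_pow]
  rw [hs, hs]
  calc ∑ p ∈ s, c p.1 * c p.2 * a p.1 p.2
      ≤ √(∑ p ∈ s, (c p.1 * c p.2) ^ 2) * √(∑ p ∈ s, a p.1 p.2 ^ 2) :=
        Real.sum_mul_le_sqrt_mul_sqrt s _ _
    _ ≤ (∑ i, c i ^ 2) * √(∑ p ∈ s, a p.1 p.2 ^ 2) :=
        mul_le_mul_of_nonneg_right hc (Real.sqrt_nonneg _)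

end Finset

namespace LinearMap.BilinForm

variable {M : Type*} [AddCommGroup M] [Module ℝ M] (B : LinearMap.BilinForm ℝ M)
  {ι : Type*} [Fintype ι] [DecidableEq ι]

theorem apply_sum_smul_le (hι : (univ : Finset ι).Nonempty) (c : ι → ℝ) (y : ι → M) :
    B (∑ i, c i • y i) (∑ i, c i • y i) ≤ (∑ i, c i ^ 2) *
      (univ.sup' hι (fun i => B (y i) (y i)) +
        √(∑ i, ∑ j, if i ≠ j then B (y j) (y i) ^ 2 else 0)) := by
  have hexpand : B (∑ i, c i • y i) (∑ i, c i • y i) = ∑ i, ∑ j, c i * c j * B (y i) (y j) := by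
    simp only [map_sum, map_smul, LinearMap.sum_apply, LinearMap.smul_apply, smul_eq_mul,
      mul_sum]
    rw [sum_comm]
    exact sum_congr rfl fun i _ => sum_congr rfl fun j _ => by ring
  have hdiag : ∑ i, c i * c i * B (y i) (y i) ≤
      (∑ i, c i ^ 2) * univ.sup' hι (fun i => B (y i) (y i)) := by
    rw [sum_mul]
    exact sum_le_sum fun i hi => by
      rw [← sq]; exact mul_le_mul_of_nonneg_left (le_sup' (fun i => B (y i) (y i)) hi) (sq_nonneg _)
  have hoff := sum_ite_ne_mul_le c fun i j => B (y i) (y j)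
  rw [sum_comm (f := fun i j => if i ≠ j then B (y i) (y j) ^ 2 else 0)] at hoff
  simp only [ne_comm] at hoff
  rw [hexpand, sum_sum_eq_sum_diag_add_sum_ite_ne, mul_add]
  exact add_le_add hdiag hoff

theorem boas_bellman (hs : ∀ x, 0 ≤ B x x) (hB : LinearMap.IsSymm B)
    (hι : (univ : Finset ι).Nonempty) (x : M) (y : ι → M) :
    ∑ i, B x (y i) ^ 2 ≤ B x x *
      (univ.sup' hι (fun i => B (y i) (y i)) +
        √(∑ i, ∑ j, if i ≠ j then B (y j) (y i) ^ 2 else 0)) := by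
  set S := ∑ i, B x (y i) ^ 2
  set K := univ.sup' hι (fun i => B (y i) (y i)) +
    √(∑ i, ∑ j, if i ≠ j then B (y j) (y i) ^ 2 else 0)
  set z := ∑ i, B x (y i) • y i
  have hxz : B x z = S := by simp only [z, S, map_sum, map_smul, smul_eq_mul, sq]
  have hK : 0 ≤ K := add_nonneg
    ((hs _).trans (le_sup' (fun i => B (y i) (y i)) hι.choose_spec)) (Real.sqrt_nonneg _)
  have hS2 : S ^ 2 ≤ B x x * (S * K) := calc
    S ^ 2 = B x z ^ 2 := by rw [hxz]
    _ ≤ B x x * B z z := B.apply_sq_le_of_symm hs hB x z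
    _ ≤ B x x * (S * K) := mul_le_mul_of_nonneg_left (B.apply_sum_smul_le hι _ y) (hs x)
  have hS0 : 0 ≤ S := sum_nonneg fun i _ => sq_nonneg _
  rcases hS0.eq_or_lt with hS | hS
  · rw [← hS]; exact mul_nonneg (hs x) hK
  · exact le_of_mul_le_mul_left (by linear_combination hS2) hS

end LinearMap.BilinForm

section GramDet

variable {E : Type*} [NormedAddCommGroup E] [InnerProductSpace ℝ E]

noncomputable def gramDetForm (H : E) : LinearMap.BilinForm ℝ E :=
  LinearMap.mk₂ ℝ (fun u v => ⟪u, v⟫ * ⟪H, H⟫ - ⟪u, H⟫ * ⟪v, H⟫)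
    (fun u u' v => by simp only [inner_add_left]; ring)
    (fun a u v => by simp only [real_inner_smul_left, smul_eq_mul]; ring)
    (fun u v v' => by simp only [inner_add_left, inner_add_right]; ring)
    (fun a u v => by simp only [real_inner_smul_left, real_inner_smul_right, smul_eq_mul]; ring)

@[simp]
theorem gramDetForm_apply (H u v : E) :
    gramDetForm H u v = ⟪u, v⟫ * ⟪H, H⟫ - ⟪u, H⟫ * ⟪v, H⟫ := rfl

theorem gramDetForm_self_nonneg (H u : E) : 0 ≤ gramDetForm H u u := by
  simpa [gramDetForm_apply, sub_nonneg] using real_inner_mul_inner_self_le u H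

theorem gramDetForm_isSymm (H : E) : LinearMap.IsSymm (gramDetForm H) :=
  LinearMap.isSymm_def.mpr fun u v => by
    simp only [gramDetForm_apply, RingHom.id_apply, real_inner_comm]; ring

end GramDet

section WeightedL2

variable {Ω : Type*} [MeasurableSpace Ω] {μ : Measure Ω} {ρ : Ω → ℝ}

theorem inner_toLp_sqrt_mul (hρ0 : ∀ s, 0 ≤ ρ s) {u v : Ω → ℝ}
    (hu : MemLp (fun s => √(ρ s) * u s) 2 μ) (hv : MemLp (fun s => √(ρ s) * v s) 2 μ) :
    ⟪hu.toLp _, hv.toLp _⟫ = ∫ s, ρ s * (u s * v s) ∂μ := by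
  rw [L2.inner_def]
  refine integral_congr_ae ?_
  filter_upwards [hu.coeFn_toLp, hv.coeFn_toLp] with s hus hvs
  rw [hus, hvs, RCLike.inner_apply, conj_trivial]
  linear_combination (u s * v s) * Real.mul_self_sqrt (hρ0 s)

theorem Ddet_eq_gramDetForm (hρ0 : ∀ s, 0 ≤ ρ s) {h u v : Ω → ℝ}
    (hh : MemLp (fun s => √(ρ s) * h s) 2 μ)
    (hu : MemLp (fun s => √(ρ s) * u s) 2 μ) (hv : MemLp (fun s => √(ρ s) * v s) 2 μ) :
    Ddet μ ρ h u v = gramDetForm (hh.toLp _) (hu.toLp _) (hv.toLp _) := by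
  simp only [Ddet, gramDetForm_apply, inner_toLp_sqrt_mul hρ0, sq]

end WeightedL2

theorem det_boas_bellman_general {Ω : Type*} [MeasurableSpace Ω] (μ : Measure Ω)
    (n : ℕ) (hn : 0 < n) (ρ f h : Ω → ℝ) (g : Fin n → Ω → ℝ)
    (hρ0 : ∀ s, 0 ≤ ρ s)
    (hf2 : MemLp (fun s => Real.sqrt (ρ s) * f s) 2 μ)
    (hg2 : ∀ i, MemLp (fun s => Real.sqrt (ρ s) * g i s) 2 μ)
    (hh2 : MemLp (fun s => Real.sqrt (ρ s) * h s) 2 μ) :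
    ∑ i, Ddet μ ρ h f (g i) ^ 2 ≤
      Ddet μ ρ h f f *
        ((Finset.univ.sup' ⟨⟨0, hn⟩, Finset.mem_univ _⟩ fun i => Ddet μ ρ h (g i) (g i)) +
          Real.sqrt (∑ i, ∑ j, if i ≠ j then Ddet μ ρ h (g j) (g i) ^ 2 else 0)) := by
  have hD := fun {u v} => Ddet_eq_gramDetForm (u := u) (v := v) hρ0 hh2
  simp only [hD hf2 hf2, hD hf2 (hg2 _), hD (hg2 _) (hg2 _)]
  exact (gramDetForm _).boas_bellman (gramDetForm_self_nonneg _) (gramDetForm_isSymm _) _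
    (hf2.toLp _) fun i => (hg2 i).toLp _

theorem det_boas_bellman {Ω : Type*} [MeasurableSpace Ω] (μ : Measure Ω)
    (n : ℕ) (hn : 0 < n) (ρ f h : Ω → ℝ) (g : Fin n → Ω → ℝ)
    (hρ : Measurable ρ) (hρ0 : ∀ s, 0 ≤ ρ s)
    (hf : Measurable f) (hg : ∀ i, Measurable (g i)) (hh : Measurable h)
    (hf2 : MemLp (fun s => Real.sqrt (ρ s) * f s) 2 μ)
    (hg2 : ∀ i, MemLp (fun s => Real.sqrt (ρ s) * g i s) 2 μ)
    (hh2 : MemLp (fun s => Real.sqrt (ρ s) * h s) 2 μ) :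
    ∑ i, Ddet μ ρ h f (g i) ^ 2 ≤
      Ddet μ ρ h f f *
        ((Finset.univ.sup' ⟨⟨0, hn⟩, Finset.mem_univ _⟩ fun i => Ddet μ ρ h (g i) (g i)) +
          Real.sqrt (∑ i, ∑ j, if i ≠ j then Ddet μ ρ h (g j) (g i) ^ 2 else 0)) :=
  det_boas_bellman_general μ n hn ρ f h g hρ0 hf2 hg2 hh2
end

section
/- The two Boas–Bellman-type bounds are incomparable: there exist vectors y₁, y₂, y₃, z in a real inner product space such that, with (u,v|z) := ⟪u,v⟫‖z‖² − ⟪u,z⟫⟪z,v⟫, the quantity A := (∑_{1≤i≠j≤3} |(yᵢ,yⱼ|z)|²)^{1/2} satisfies A > B where B := 2·max_{1≤i≠j≤3} |(yᵢ,yⱼ|z)|; and there also exist vectors for which B > A. -/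
/-!
With `z` a unit vector and `x` a unit vector orthogonal to it, `(x, x | z) = 1`. Taking
`y₁ = y₂ = y₃ = x`, all six off-diagonal values are `1`, so the root-sum bound is `√6` while the
max bound is `2`. Taking `(y₁, y₂, y₃) = (x, x, 0)`, only the pairs `(1, 2)` and `(2, 1)`
contribute, so the root-sum bound drops to `√2` while the max bound stays `2`.
-/

/-- The standard 2-inner product on a real inner product space. -/
noncomputable def tinnerR {H : Type*} [NormedAddCommGroup H] [InnerProductSpace ℝ H]
    (x y z : H) : ℝ :=
  (inner ℝ x y : ℝ) * ‖z‖ ^ 2 - (inner ℝ x z : ℝ) * (inner ℝ z y : ℝ)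

section

variable {H : Type*} [NormedAddCommGroup H] [InnerProductSpace ℝ H]

lemma tinnerR_zero_left (y z : H) : tinnerR 0 y z = 0 := by
  simp [tinnerR]

lemma tinnerR_zero_right (x z : H) : tinnerR x 0 z = 0 := by
  simp [tinnerR]

lemma tinnerR_self_of_orthonormal {ι : Type*} {v : ι → H} (hv : Orthonormal ℝ v) {i j : ι}
    (hij : i ≠ j) : tinnerR (v i) (v i) (v j) = 1 := by
  simp [tinnerR, hv.1, hv.inner_eq_zero hij]

end

theorem bounds_incomparable :
    (∃ (y : Fin 3 → EuclideanSpace ℝ (Fin 3)) (z : EuclideanSpace ℝ (Fin 3)),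
      Real.sqrt (∑ i, ∑ j, if i ≠ j then |tinnerR (y i) (y j) z| ^ 2 else 0) >
        2 * ((Finset.univ.filter fun p : Fin 3 × Fin 3 => p.1 ≠ p.2).sup'
          ⟨(0, 1), Finset.mem_filter.mpr ⟨Finset.mem_univ _, by decide⟩⟩
          fun p => |tinnerR (y p.1) (y p.2) z|)) ∧
    (∃ (y : Fin 3 → EuclideanSpace ℝ (Fin 3)) (z : EuclideanSpace ℝ (Fin 3)),
      2 * ((Finset.univ.filter fun p : Fin 3 × Fin 3 => p.1 ≠ p.2).sup'
          ⟨(0, 1), Finset.mem_filter.mpr ⟨Finset.mem_univ _, by decide⟩⟩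
          fun p => |tinnerR (y p.1) (y p.2) z|) >
        Real.sqrt (∑ i, ∑ j, if i ≠ j then |tinnerR (y i) (y j) z| ^ 2 else 0)) := by
  set e : Fin 3 → EuclideanSpace ℝ (Fin 3) := fun i => EuclideanSpace.single i 1
  have he : tinnerR (e 0) (e 0) (e 1) = 1 :=
    tinnerR_self_of_orthonormal EuclideanSpace.orthonormal_single (by decide)
  constructor
  · refine ⟨fun _ => e 0, e 1, ?_⟩
    simp [he, Fin.sum_univ_three, Real.lt_sqrt]
    norm_num
  · refine ⟨![e 0, e 0, 0], e 1, lt_of_lt_of_le (b := 2 * 1) ?_ ?_⟩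
    · simp [Fin.sum_univ_three, he, tinnerR_zero_left, tinnerR_zero_right]
      norm_num
    · gcongr
      exact Finset.le_sup'_of_le _ (b := (0, 1)) (by decide) (by simp [he])
end
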